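/- Let n ≥ 3, let w ∈ span(e₂,…,e_{n-1}) be nonzero, and let v ∈ ℝⁿ with vₙ > 0. Let U_w(x) = x − xₙ w + (B(x,w) − xₙ B(w,w)/2) e₁ and set Sᵢ = Σ_{j=0}^{i-1} U_w^j(v) for i ∈ ℕ. Then B(Sᵢ, eₙ − e₁) → −∞ as i → ∞. -/

import Mathlib

/- In this file `ℝⁿ` of the paper (with `n ≥ 3`) is encoded as `Fin (n + 3) → ℝ`
(the Lean parameter `n : ℕ` corresponds to the paper's `n - 3`); the paper's basis
vector `eᵢ` (1-based) is the coordinate of index `i - 1`. -/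

/-- The Lorentzian bilinear form `B(x,y) = x₁yₙ + xₙy₁ + Σ_{i=2}^{n-1} xᵢyᵢ`. -/
noncomputable def bform (n : ℕ) (x y : Fin (n + 3) → ℝ) : ℝ :=
  x ⟨0, by omega⟩ * y ⟨n + 2, by omega⟩ + x ⟨n + 2, by omega⟩ * y ⟨0, by omega⟩ +
    ∑ i : Fin (n + 3), if 1 ≤ i.val ∧ i.val ≤ n + 1 then x i * y i else 0

/-- The first standard basis vector `e₁`. -/
noncomputable def eOne (n : ℕ) : Fin (n + 3) → ℝ :=
  Pi.single (⟨0, by omega⟩ : Fin (n + 3)) (1 : ℝ)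

/-- The last standard basis vector `eₙ`. -/
noncomputable def eLast (n : ℕ) : Fin (n + 3) → ℝ :=
  Pi.single (⟨n + 2, by omega⟩ : Fin (n + 3)) (1 : ℝ)

/-- The unipotent linear map `U_w(x) = x - xₙ w + (B(x,w) - xₙ B(w,w)/2) e₁`. -/
noncomputable def uMap (n : ℕ) (w x : Fin (n + 3) → ℝ) : Fin (n + 3) → ℝ :=
  x - x ⟨n + 2, by omega⟩ • w +
    (bform n x w - x ⟨n + 2, by omega⟩ * bform n w w / 2) • eOne n

open Filter

lemma bform_add (n : ℕ) (x y u : Fin (n + 3) → ℝ) :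
    bform n (x + y) u = bform n x u + bform n y u := by
  have h : ∀ i : Fin (n + 3),
      (if 1 ≤ i.val ∧ i.val ≤ n + 1 then (x i + y i) * u i else 0) =
      (if 1 ≤ i.val ∧ i.val ≤ n + 1 then x i * u i else 0) +
      (if 1 ≤ i.val ∧ i.val ≤ n + 1 then y i * u i else 0) := by
    intro i; split <;> ring
  simp only [bform, Pi.add_apply, h, Finset.sum_add_distrib]
  ring

lemma bform_smul (n : ℕ) (a : ℝ) (x u : Fin (n + 3) → ℝ) :
    bform n (a • x) u = a * bform n x u := by
  have h : ∀ i : Fin (n + 3),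
      (if 1 ≤ i.val ∧ i.val ≤ n + 1 then (a * x i) * u i else 0) =
      a * (if 1 ≤ i.val ∧ i.val ≤ n + 1 then x i * u i else 0) := by
    intro i; split <;> ring
  simp only [bform, Pi.smul_apply, smul_eq_mul, h, ← Finset.mul_sum]
  ring

lemma bform_zero (n : ℕ) (u : Fin (n + 3) → ℝ) : bform n 0 u = 0 := by
  simp [bform]

lemma bform_sub (n : ℕ) (x y u : Fin (n + 3) → ℝ) :
    bform n (x - y) u = bform n x u - bform n y u := by
  have := bform_add n (x - y) y u
  rw [sub_add_cancel] at this
  linarith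

lemma bform_sum (n : ℕ) (u : Fin (n + 3) → ℝ) (g : ℕ → Fin (n + 3) → ℝ) (i : ℕ) :
    bform n (∑ j ∈ Finset.range i, g j) u = ∑ j ∈ Finset.range i, bform n (g j) u := by
  induction i with
  | zero => simp [bform_zero]
  | succ k ih => rw [Finset.sum_range_succ, Finset.sum_range_succ, bform_add, ih]

lemma bform_future (n : ℕ) (x : Fin (n + 3) → ℝ) :
    bform n x (eLast n - eOne n) = x ⟨0, by omega⟩ - x ⟨n + 2, by omega⟩ := by
  have hz : ∀ i : Fin (n + 3), 1 ≤ i.val → i.val ≤ n + 1 →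
      (eLast n - eOne n) i = 0 := by
    intro i h1 h2
    have hA : i.val ≠ 0 := by omega
    have hB : i.val ≠ n + 2 := by omega
    simp [eLast, eOne, Pi.single_apply, Fin.ext_iff, hA, hB]
  have hsum : ∑ i : Fin (n + 3),
      (if 1 ≤ i.val ∧ i.val ≤ n + 1 then x i * (eLast n - eOne n) i else 0) = 0 := by
    apply Finset.sum_eq_zero
    intro i _
    split
    · rename_i h; rw [hz i h.1 h.2]; ring
    · rfl
  have h1 : (eLast n - eOne n) ⟨n + 2, by omega⟩ = 1 := by
    simp [eLast, eOne, Pi.single_apply, Fin.ext_iff]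
  have h2 : (eLast n - eOne n) ⟨0, by omega⟩ = -1 := by
    simp [eLast, eOne, Pi.single_apply, Fin.ext_iff]
  rw [bform, hsum, h1, h2]; ring

lemma bform_eOne (n : ℕ) (u : Fin (n + 3) → ℝ) :
    bform n (eOne n) u = u ⟨n + 2, by omega⟩ := by
  have hz : ∀ i : Fin (n + 3), 1 ≤ i.val → eOne n i = 0 := by
    intro i h1
    have hA : i.val ≠ 0 := by omega
    simp [eOne, Pi.single_apply, Fin.ext_iff, hA]
  have hsum : ∑ i : Fin (n + 3),
      (if 1 ≤ i.val ∧ i.val ≤ n + 1 then eOne n i * u i else 0) = 0 := by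
    apply Finset.sum_eq_zero
    intro i _
    split
    · rename_i h; rw [hz i h.1]; ring
    · rfl
  have h1 : eOne n ⟨0, by omega⟩ = 1 := by simp [eOne]
  rw [bform, hsum, h1, hz ⟨n + 2, by omega⟩ (by simp)]; ring

lemma uMap_last (n : ℕ) (w : Fin (n + 3) → ℝ) (hwn : w ⟨n + 2, by omega⟩ = 0)
    (x : Fin (n + 3) → ℝ) :
    uMap n w x ⟨n + 2, by omega⟩ = x ⟨n + 2, by omega⟩ := by
  have he : eOne n ⟨n + 2, by omega⟩ = 0 := by
    simp [eOne, Pi.single_apply, Fin.ext_iff]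
  simp [uMap, Pi.add_apply, Pi.sub_apply, Pi.smul_apply, hwn, he]

lemma uMap_zero (n : ℕ) (w : Fin (n + 3) → ℝ) (hw0 : w ⟨0, by omega⟩ = 0)
    (x : Fin (n + 3) → ℝ) :
    uMap n w x ⟨0, by omega⟩ =
      x ⟨0, by omega⟩ + (bform n x w - x ⟨n + 2, by omega⟩ * bform n w w / 2) := by
  have he : eOne n 0 = 1 := by simp [eOne]
  have hw0' : w 0 = 0 := hw0
  simp [uMap, Pi.add_apply, Pi.sub_apply, Pi.smul_apply, hw0', he]

lemma uMap_bform (n : ℕ) (w : Fin (n + 3) → ℝ) (hwn : w ⟨n + 2, by omega⟩ = 0)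
    (x : Fin (n + 3) → ℝ) :
    bform n (uMap n w x) w = bform n x w - x ⟨n + 2, by omega⟩ * bform n w w := by
  rw [uMap, bform_add, bform_sub, bform_smul, bform_smul, bform_eOne, hwn]
  ring

lemma bform_self_pos (n : ℕ) (w : Fin (n + 3) → ℝ)
    (hw0 : w ⟨0, by omega⟩ = 0) (hwn : w ⟨n + 2, by omega⟩ = 0) (hw : w ≠ 0) :
    0 < bform n w w := by
  obtain ⟨i, hi⟩ := Function.ne_iff.1 hw
  simp only [Pi.zero_apply] at hi
  have h1 : 1 ≤ i.val := by
    rcases Nat.eq_zero_or_pos i.val with h | h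
    · exact absurd (show w i = 0 by rwa [show i = ⟨0, by omega⟩ from Fin.ext h]) hi
    · exact h
  have h2 : i.val ≤ n + 1 := by
    rcases Nat.lt_or_ge i.val (n + 2) with h | h
    · omega
    · have : i.val = n + 2 := by omega
      exact absurd (show w i = 0 by rwa [show i = ⟨n + 2, by omega⟩ from Fin.ext this]) hi
  have hpos : 0 < ∑ j : Fin (n + 3),
      if 1 ≤ j.val ∧ j.val ≤ n + 1 then w j * w j else 0 := by
    apply Finset.sum_pos'
    · intro j _
      split
      · exact mul_self_nonneg _
      · exact le_refl 0
    · exact ⟨i, Finset.mem_univ i, by rw [if_pos ⟨h1, h2⟩]; exact mul_self_pos.2 hi⟩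
  unfold bform
  rw [hw0, hwn]
  linarith

lemma quad_tendsto (K c A : ℝ) (hK : 0 < K) :
    Tendsto (fun j : ℕ => A + c * j - K * (j : ℝ) ^ 2) atTop atBot := by
  have hcast : Tendsto (fun j : ℕ => (j : ℝ)) atTop atTop := tendsto_natCast_atTop_atTop
  have h2 : Tendsto (fun j : ℕ => K * (j : ℝ)) atTop atTop :=
    Tendsto.const_mul_atTop hK hcast
  have h3 : Tendsto (fun j : ℕ => -(K * (j : ℝ))) atTop atBot :=
    tendsto_neg_atTop_atBot.comp h2
  have h1 : Tendsto (fun j : ℕ => c + -(K * (j : ℝ))) atTop atBot :=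
    tendsto_atBot_add_const_left _ c h3
  have ev : ∀ᶠ j : ℕ in atTop, c + -(K * (j : ℝ)) ≤ -1 := h1.eventually_le_atBot (-1)
  have bound : ∀ᶠ j : ℕ in atTop, A + c * j - K * (j : ℝ) ^ 2 ≤ A + -(j : ℝ) := by
    filter_upwards [ev] with j hj
    nlinarith [mul_le_mul_of_nonneg_left hj (Nat.cast_nonneg (α := ℝ) j)]
  have hg : Tendsto (fun j : ℕ => A + -(j : ℝ)) atTop atBot :=
    tendsto_atBot_add_const_left _ A (tendsto_neg_atTop_atBot.comp hcast)
  exact tendsto_atBot_mono' atTop bound hg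

lemma sum_tendsto (b : ℕ → ℝ) (hb : Tendsto b atTop atBot) :
    Tendsto (fun i => ∑ j ∈ Finset.range i, b j) atTop atBot := by
  obtain ⟨N, hN⟩ := eventually_atTop.1 (hb.eventually_le_atBot (-1))
  set C : ℝ := ∑ j ∈ Finset.range N, b j with hC
  have bound : ∀ᶠ i : ℕ in atTop,
      ∑ j ∈ Finset.range i, b j ≤ (C + N) + -(i : ℝ) := by
    filter_upwards [eventually_ge_atTop N] with i hi
    have hsplit : ∑ j ∈ Finset.range N, b j + ∑ j ∈ Finset.Ico N i, b j
        = ∑ j ∈ Finset.range i, b j := by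
      rw [Finset.range_eq_Ico,
        Finset.sum_Ico_consecutive b (Nat.zero_le N) hi, ← Finset.range_eq_Ico]
    have h2 : ∑ j ∈ Finset.Ico N i, b j ≤ ∑ j ∈ Finset.Ico N i, (-1 : ℝ) :=
      Finset.sum_le_sum fun j hj => hN j (Finset.mem_Ico.1 hj).1
    rw [Finset.sum_const, Nat.card_Ico, nsmul_eq_mul, Nat.cast_sub hi] at h2
    linarith [hsplit, h2]
  have hg : Tendsto (fun i : ℕ => (C + N) + -(i : ℝ)) atTop atBot :=
    tendsto_atBot_add_const_left _ _ (tendsto_neg_atTop_atBot.comp tendsto_natCast_atTop_atTop)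
  exact tendsto_atBot_mono' atTop bound hg

lemma orbit_coords (n : ℕ) (w v : Fin (n + 3) → ℝ)
    (hw0 : w ⟨0, by omega⟩ = 0) (hwn : w ⟨n + 2, by omega⟩ = 0) (j : ℕ) :
    ((uMap n w)^[j] v) ⟨n + 2, by omega⟩ = v ⟨n + 2, by omega⟩ ∧
    bform n ((uMap n w)^[j] v) w
      = bform n v w - j * (v ⟨n + 2, by omega⟩ * bform n w w) ∧
    ((uMap n w)^[j] v) ⟨0, by omega⟩
      = v ⟨0, by omega⟩ + j * bform n v w
        - (j : ℝ) ^ 2 * (v ⟨n + 2, by omega⟩ * bform n w w) / 2 := by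
  induction j with
  | zero => simp
  | succ k ih =>
    obtain ⟨ihN, ihB, ih0⟩ := ih
    rw [Function.iterate_succ_apply']
    refine ⟨?_, ?_, ?_⟩
    · rw [uMap_last n w hwn, ihN]
    · rw [uMap_bform n w hwn, ihB, ihN]
      push_cast
      ring
    · rw [uMap_zero n w hw0, ih0, ihB, ihN]
      push_cast
      ring

/-- For `w ∈ span(e₂,…,e_{n-1})` nonzero and `v` with `vₙ > 0`, the
partial sums `Sᵢ = Σ_{j=0}^{i-1} U_w^j(v)` satisfy `B(Sᵢ, eₙ - e₁) → -∞`. -/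
theorem stmt_11 (n : ℕ) (w v : Fin (n + 3) → ℝ)
    (hw0 : w ⟨0, by omega⟩ = 0) (hwn : w ⟨n + 2, by omega⟩ = 0) (hw : w ≠ 0)
    (hv : v ⟨n + 2, by omega⟩ > 0) :
    Filter.Tendsto
      (fun i : ℕ =>
        bform n (∑ j ∈ Finset.range i, (uMap n w)^[j] v) (eLast n - eOne n))
      Filter.atTop Filter.atBot := by
  have hQ : 0 < bform n w w := bform_self_pos n w hw0 hwn hw
  set K : ℝ := v ⟨n + 2, by omega⟩ * bform n w w / 2 with hKdef
  have hK : 0 < K := by positivity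
  have hterm : ∀ j : ℕ,
      bform n ((uMap n w)^[j] v) (eLast n - eOne n)
        = (v ⟨0, by omega⟩ - v ⟨n + 2, by omega⟩) + bform n v w * j - K * (j : ℝ) ^ 2 := by
    intro j
    obtain ⟨hN, _, h0⟩ := orbit_coords n w v hw0 hwn j
    rw [bform_future, hN, h0, hKdef]
    ring
  have heq : (fun i : ℕ =>
      bform n (∑ j ∈ Finset.range i, (uMap n w)^[j] v) (eLast n - eOne n))
      = fun i : ℕ => ∑ j ∈ Finset.range i,
          ((v ⟨0, by omega⟩ - v ⟨n + 2, by omega⟩) + bform n v w * j - K * (j : ℝ) ^ 2) := by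
    funext i
    rw [bform_sum]
    exact Finset.sum_congr rfl fun j _ => hterm j
  rw [heq]
  exact sum_tendsto _ (quad_tendsto K (bform n v w) _ hK)
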